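/- arXiv:1406.1578 — 2 statements merged into one kernel-verified Lean document; each statement's English description precedes it below -/
import Mathlib

section
/- Let (L, [·,·], α) be a multiplicative Hom-Lie superalgebra. If D_θ is an element of the α^k-centroid of degree θ and D_μ is an element of the α^s-centroid of degree μ, then the supercommutator [D_θ, D_μ] = D_θ D_μ - (-1)^{θμ} D_μ D_θ belongs to the α^{k+s}-centroid, i.e., the centroid C(L) = ⊕_{k≥0} C_{α^k}(L) is closed under the supercommutator bracket. -/
open LinearMap

def ssign (K : Type*) [Field K] (a b : ZMod 2) : K := (-1 : K) ^ (a.val * b.val)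

lemma ssign_mul_self {K : Type*} [Field K] (a b : ZMod 2) :
    ssign K a b * ssign K a b = 1 := by
  rw [ssign, ← pow_add]
  exact Even.neg_one_pow ⟨_, rfl⟩

lemma ssign_comm {K : Type*} [Field K] (a b : ZMod 2) : ssign K a b = ssign K b a := by
  rw [ssign, ssign, Nat.mul_comm]

lemma pow_mod_two_eq {K : Type*} [Field K] {u : K} (hu : u ^ 2 = 1) (m : ℕ) :
    u ^ (m % 2) = u ^ m := by
  conv_rhs => rw [← Nat.mod_add_div m 2]
  rw [pow_add, pow_mul, hu, one_pow, mul_one]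

lemma ssign_expand {K : Type*} [Field K] (a b c : ZMod 2) :
    ssign K a (b + c) = ssign K a b * ssign K a c := by
  have hu : ((-1 : K) ^ a.val) ^ 2 = 1 := by
    rw [← pow_mul, Nat.mul_comm, pow_mul]; norm_num
  rw [ssign, ssign, ssign, pow_mul, pow_mul, pow_mul, ZMod.val_add,
    pow_mod_two_eq hu, pow_add]


structure HomLieSuper (K L : Type*) [Field K] [AddCommGroup L] [Module K L] where
  bracket : L →ₗ[K] L →ₗ[K] L
  a : L →ₗ[K] L
  grading : ZMod 2 → Submodule K L
  bracket_mem : ∀ i j : ZMod 2, ∀ x ∈ grading i, ∀ y ∈ grading j,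
    bracket x y ∈ grading (i + j)
  a_mem : ∀ i : ZMod 2, ∀ x ∈ grading i, a x ∈ grading i
  skew : ∀ i j : ZMod 2, ∀ x ∈ grading i, ∀ y ∈ grading j,
    bracket x y = - (ssign K i j) • bracket y x
  jacobi : ∀ i j k : ZMod 2, ∀ x ∈ grading i, ∀ y ∈ grading j, ∀ z ∈ grading k,
    ssign K k i • bracket (a x) (bracket y z) +
    ssign K i j • bracket (a y) (bracket z x) +
    ssign K j k • bracket (a z) (bracket x y) = 0

variable {K L : Type*} [Field K] [AddCommGroup L] [Module K L]

namespace HomLieSuper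

/-- α preserves the bracket. -/
def Multiplicative (H : HomLieSuper K L) : Prop :=
  ∀ x y : L, H.a (H.bracket x y) = H.bracket (H.a x) (H.a y)

/-- `D` is homogeneous of degree `θ`. -/
def IsHomog (H : HomLieSuper K L) (θ : ZMod 2) (D : L →ₗ[K] L) : Prop :=
  ∀ i : ZMod 2, ∀ x ∈ H.grading i, D x ∈ H.grading (i + θ)

/-- `D` is a generalized `α^k`-derivation of degree `θ` with associated maps `D'`, `D''`. -/
def GenDer (H : HomLieSuper K L) (θ : ZMod 2) (k : ℕ) (D D' D'' : L →ₗ[K] L) : Prop :=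
  H.IsHomog θ D ∧ H.IsHomog θ D' ∧ H.IsHomog θ D'' ∧
  D * H.a = H.a * D ∧ D' * H.a = H.a * D' ∧ D'' * H.a = H.a * D'' ∧
  ∀ i : ZMod 2, ∀ x ∈ H.grading i, ∀ y : L,
    H.bracket (D x) ((H.a ^ k) y) + ssign K θ i • H.bracket ((H.a ^ k) x) (D' y)
      = D'' (H.bracket x y)

/-- `D` is an `α^k`-quasiderivation of degree `θ` with witness `D'`. -/
def QDer (H : HomLieSuper K L) (θ : ZMod 2) (k : ℕ) (D D' : L →ₗ[K] L) : Prop :=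
  H.GenDer θ k D D D'

/-- `D` is an `α^k`-derivation of degree `θ`. -/
def Der (H : HomLieSuper K L) (θ : ZMod 2) (k : ℕ) (D : L →ₗ[K] L) : Prop :=
  H.QDer θ k D D

/-- `D` belongs to the `α^k`-centroid, with degree `θ`. -/
def Cent (H : HomLieSuper K L) (θ : ZMod 2) (k : ℕ) (D : L →ₗ[K] L) : Prop :=
  H.IsHomog θ D ∧ D * H.a = H.a * D ∧
  ∀ i : ZMod 2, ∀ x ∈ H.grading i, ∀ y : L,
    H.bracket (D x) ((H.a ^ k) y) = ssign K θ i • H.bracket ((H.a ^ k) x) (D y) ∧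
    H.bracket (D x) ((H.a ^ k) y) = D (H.bracket x y)

/-- `D` belongs to the `α^k`-quasicentroid, with degree `θ`. -/
def QC (H : HomLieSuper K L) (θ : ZMod 2) (k : ℕ) (D : L →ₗ[K] L) : Prop :=
  H.IsHomog θ D ∧ D * H.a = H.a * D ∧
  ∀ i : ZMod 2, ∀ x ∈ H.grading i, ∀ y : L,
    H.bracket (D x) ((H.a ^ k) y) = ssign K θ i • H.bracket ((H.a ^ k) x) (D y)

/-- `D` is a central `α^k`-derivation of degree `θ`. -/
def ZDer (H : HomLieSuper K L) (θ : ZMod 2) (k : ℕ) (D : L →ₗ[K] L) : Prop :=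
  H.IsHomog θ D ∧ D * H.a = H.a * D ∧
  ∀ i : ZMod 2, ∀ x ∈ H.grading i, ∀ y : L,
    H.bracket (D x) ((H.a ^ k) y) = 0 ∧ D (H.bracket x y) = 0

/-- Supercommutator of homogeneous endomorphisms of degrees `θ`, `μ`. -/
def scomm (K : Type*) [Field K] {L : Type*} [AddCommGroup L] [Module K L]
    (θ μ : ZMod 2) (D E : L →ₗ[K] L) : L →ₗ[K] L :=
  D * E - ssign K θ μ • (E * D)

end HomLieSuper

open HomLieSuper in
theorem stmt2 (H : HomLieSuper K L) (hm : H.Multiplicative)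
    (θ μ : ZMod 2) (k s : ℕ) (D E : L →ₗ[K] L)
    (hD : H.Cent θ k D) (hE : H.Cent μ s E) :
    H.Cent (θ + μ) (k + s) (scomm K θ μ D E) := by
  obtain ⟨hDh, hDa, hDrel⟩ := hD
  obtain ⟨hEh, hEa, hErel⟩ := hE
  have hDpow : ∀ (n : ℕ) (x : L), D ((H.a ^ n) x) = (H.a ^ n) (D x) := fun n x => by
    simpa [Module.End.mul_apply] using LinearMap.congr_fun (Commute.pow_right hDa n) x
  have hEpow : ∀ (n : ℕ) (x : L), E ((H.a ^ n) x) = (H.a ^ n) (E x) := fun n x => by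
    simpa [Module.End.mul_apply] using LinearMap.congr_fun (Commute.pow_right hEa n) x
  have hpow_mem : ∀ (n : ℕ) (i : ZMod 2), ∀ x ∈ H.grading i, (H.a ^ n) x ∈ H.grading i := by
    intro n
    induction n with
    | zero => intro i x hx; simpa using hx
    | succ n ih =>
      intro i x hx
      rw [pow_succ, Module.End.mul_apply]
      exact ih i _ (H.a_mem i x hx)
  have hks : ∀ y : L, (H.a ^ (k + s)) y = (H.a ^ k) ((H.a ^ s) y) := fun y => by
    rw [pow_add, Module.End.mul_apply]
  have hsk : ∀ y : L, (H.a ^ (k + s)) y = (H.a ^ s) ((H.a ^ k) y) := fun y => by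
    rw [Nat.add_comm, pow_add, Module.End.mul_apply]
  -- flipped centroid relations
  have hDflip : ∀ (i : ZMod 2), ∀ x ∈ H.grading i, ∀ y : L,
      H.bracket ((H.a ^ k) x) (D y) = ssign K θ i • D (H.bracket x y) := by
    intro i x hx y
    obtain ⟨d1, d2⟩ := hDrel i x hx y
    rw [← d2, d1, smul_smul, ssign_mul_self, one_smul]
  -- (1) [D(Ex), a^{k+s} y] = D (E [x,y])
  have h1 : ∀ (i : ZMod 2), ∀ x ∈ H.grading i, ∀ y : L,
      H.bracket (D (E x)) ((H.a ^ (k + s)) y) = D (E (H.bracket x y)) := by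
    intro i x hx y
    rw [hks, (hDrel (i + μ) (E x) (hEh i x hx) ((H.a ^ s) y)).2, (hErel i x hx y).2]
  -- (2) [E(Dx), a^{k+s} y] = E (D [x,y])
  have h2 : ∀ (i : ZMod 2), ∀ x ∈ H.grading i, ∀ y : L,
      H.bracket (E (D x)) ((H.a ^ (k + s)) y) = E (D (H.bracket x y)) := by
    intro i x hx y
    rw [hsk, (hErel (i + θ) (D x) (hDh i x hx) ((H.a ^ k) y)).2, (hDrel i x hx y).2]
  -- (3) key super-commutation: D E [x,y] = ssign θ μ • E D [x,y]
  have h3 : ∀ (i : ZMod 2), ∀ x ∈ H.grading i, ∀ y : L,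
      D (E (H.bracket x y)) = ssign K θ μ • E (D (H.bracket x y)) := by
    intro i x hx y
    have c1 := (hDrel (i + μ) (E x) (hEh i x hx) ((H.a ^ s) y)).1
    rw [← hEpow k x, hDpow s y] at c1
    rw [(hErel i ((H.a ^ k) x) (hpow_mem k i x hx) (D y)).2] at c1
    rw [hDflip i x hx y, map_smul] at c1
    rw [← h1 i x hx y, hks, c1, smul_smul, ssign_expand, mul_comm (ssign K θ i),
      mul_assoc, ssign_mul_self, mul_one]
  -- (4) [a^{k+s} x, D(E y)] = (ssign θ i * (ssign μ i * ssign θ μ)) • E (D [x,y])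
  have h4 : ∀ (i : ZMod 2), ∀ x ∈ H.grading i, ∀ y : L,
      H.bracket ((H.a ^ (k + s)) x) (D (E y))
        = (ssign K θ i * (ssign K μ i * ssign K θ μ)) • E (D (H.bracket x y)) := by
    intro i x hx y
    have c1 := (hDrel i ((H.a ^ s) x) (hpow_mem s i x hx) (E y)).1
    rw [hDpow s x, ← hEpow k y, ← hks] at c1
    have c2 := (hErel (i + θ) (D x) (hDh i x hx) ((H.a ^ k) y)).1
    rw [← hsk] at c2
    rw [h2 i x hx y] at c2
    -- c2 : E(D[x,y]) = ssign μ (i+θ) • [a^s(Dx), E(a^k y)]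
    have c3 : H.bracket ((H.a ^ s) (D x)) (E ((H.a ^ k) y))
        = ssign K μ (i + θ) • E (D (H.bracket x y)) := by
      rw [c2, smul_smul, ssign_mul_self, one_smul]
    rw [c3] at c1
    have := c1.symm
    calc H.bracket ((H.a ^ (k + s)) x) (D (E y))
        = (ssign K θ i * ssign K θ i) • H.bracket ((H.a ^ (k + s)) x) (D (E y)) := by
          rw [ssign_mul_self, one_smul]
      _ = ssign K θ i • (ssign K μ (i + θ)) • E (D (H.bracket x y)) := by
          rw [mul_smul]; rw [← c1]
      _ = (ssign K θ i * (ssign K μ i * ssign K θ μ)) • E (D (H.bracket x y)) := by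
          rw [smul_smul, ssign_expand, ssign_comm μ θ]
  -- (5) [a^{k+s} x, E(D y)] = (ssign μ i * ssign θ i) • E (D [x,y])
  have h5 : ∀ (i : ZMod 2), ∀ x ∈ H.grading i, ∀ y : L,
      H.bracket ((H.a ^ (k + s)) x) (E (D y))
        = (ssign K μ i * ssign K θ i) • E (D (H.bracket x y)) := by
    intro i x hx y
    have c1 := (hErel i ((H.a ^ k) x) (hpow_mem k i x hx) (D y)).1
    rw [(hErel i ((H.a ^ k) x) (hpow_mem k i x hx) (D y)).2] at c1
    rw [hDflip i x hx y, map_smul, ← hsk] at c1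
    -- c1 : ssign θ i • E(D[x,y]) = ssign μ i • [a^{k+s}x, E(Dy)]
    calc H.bracket ((H.a ^ (k + s)) x) (E (D y))
        = (ssign K μ i * ssign K μ i) • H.bracket ((H.a ^ (k + s)) x) (E (D y)) := by
          rw [ssign_mul_self, one_smul]
      _ = ssign K μ i • (ssign K θ i • E (D (H.bracket x y))) := by
          rw [mul_smul]; rw [← c1]
      _ = (ssign K μ i * ssign K θ i) • E (D (H.bracket x y)) := by rw [smul_smul]
  -- scomm applied
  have hsc : ∀ z : L, (scomm K θ μ D E) z = D (E z) - ssign K θ μ • E (D z) := fun z => by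
    simp [scomm, Module.End.mul_apply, LinearMap.sub_apply, LinearMap.smul_apply]
  refine ⟨?_, ?_, ?_⟩
  · intro i x hx
    rw [hsc]
    have m1 : D (E x) ∈ H.grading (i + (θ + μ)) := by
      have := hDh (i + μ) (E x) (hEh i x hx)
      convert this using 2
      ring
    have m2 : E (D x) ∈ H.grading (i + (θ + μ)) := by
      have := hEh (i + θ) (D x) (hDh i x hx)
      convert this using 2
      ring
    exact sub_mem m1 (Submodule.smul_mem _ _ m2)
  · have hDE : (D * E) * H.a = H.a * (D * E) := by
      rw [mul_assoc, hEa, ← mul_assoc, hDa, mul_assoc]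
    have hED : (E * D) * H.a = H.a * (E * D) := by
      rw [mul_assoc, hDa, ← mul_assoc, hEa, mul_assoc]
    rw [scomm, sub_mul, mul_sub, smul_mul_assoc, mul_smul_comm, hDE, hED]
  · intro i x hx y
    have e1 : H.bracket ((scomm K θ μ D E) x) ((H.a ^ (k + s)) y) = 0 := by
      rw [hsc, map_sub, map_smul, LinearMap.sub_apply, LinearMap.smul_apply,
        h1 i x hx y, h2 i x hx y, h3 i x hx y, sub_self]
    have e2 : H.bracket ((H.a ^ (k + s)) x) ((scomm K θ μ D E) y) = 0 := by
      rw [hsc, map_sub, map_smul, h4 i x hx y, h5 i x hx y, smul_smul,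
        show ssign K θ μ * (ssign K μ i * ssign K θ i)
          = ssign K θ i * (ssign K μ i * ssign K θ μ) from by ring, sub_self]
    have e3 : (scomm K θ μ D E) (H.bracket x y) = 0 := by
      rw [hsc, h3 i x hx y, sub_self]
    refine ⟨?_, ?_⟩
    · rw [e1, e2, smul_zero]
    · rw [e1, e3]
end

section
/- Let (L, [·,·], α) be a multiplicative Hom-Lie superalgebra. If D_λ and D_θ are homogeneous elements of the quasicentroid QC(L) (of degrees λ, θ, belonging to QC_{α^k}(L) and QC_{α^s}(L) respectively), then their super anti-commutator D_λ • D_θ = D_λ D_θ + (-1)^{λθ} D_θ D_λ belongs to QC_{α^{k+s}}(L). -/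
open LinearMap

variable {K L : Type*} [Field K] [AddCommGroup L] [Module K L]

lemma ssign_id1 (a b c : ZMod 2) :
    ssign K a (c + b) * ssign K b c = ssign K (a + b) c * ssign K a b := by
  simp only [ssign, ← pow_add]
  rw [neg_one_pow_eq_pow_mod_two, neg_one_pow_eq_pow_mod_two (n := (a + b).val * c.val + _)]
  fin_cases a <;> fin_cases b <;> fin_cases c <;> congr 1

lemma ssign_id2 (a b c : ZMod 2) :
    ssign K a b * (ssign K b (c + a) * ssign K a c) = ssign K (a + b) c := by
  simp only [ssign, ← pow_add]
  rw [neg_one_pow_eq_pow_mod_two, neg_one_pow_eq_pow_mod_two (n := (a + b).val * c.val)]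
  fin_cases a <;> fin_cases b <;> fin_cases c <;> congr 1

lemma apow_mem (H : HomLieSuper K L) (n : ℕ) (i : ZMod 2) (x : L)
    (hx : x ∈ H.grading i) : (H.a ^ n) x ∈ H.grading i := by
  induction n with
  | zero => simpa using hx
  | succ m ih =>
    rw [pow_succ', Module.End.mul_apply]
    exact H.a_mem i _ ih

lemma comm_pow {D A : L →ₗ[K] L} (h : D * A = A * D) (n : ℕ) (x : L) :
    D ((A ^ n) x) = (A ^ n) (D x) := by
  have := (Commute.pow_right (h : Commute D A) n)
  exact DFunLike.congr_fun this x

open HomLieSuper in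
theorem stmt19 (H : HomLieSuper K L) (hm : H.Multiplicative)
    (θ μ : ZMod 2) (k s : ℕ) (D E : L →ₗ[K] L)
    (hD : H.QC θ k D) (hE : H.QC μ s E) :
    H.QC (θ + μ) (k + s) (D * E + ssign K θ μ • (E * D)) := by
  obtain ⟨hDh, hDa, hDq⟩ := hD
  obtain ⟨hEh, hEa, hEq⟩ := hE
  refine ⟨?_, ?_, ?_⟩
  · intro i x hx
    simp only [LinearMap.add_apply, LinearMap.smul_apply, Module.End.mul_apply]
    refine Submodule.add_mem _ ?_ (Submodule.smul_mem _ _ ?_)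
    · have := hDh _ _ (hEh i x hx)
      rwa [add_assoc, add_comm μ θ] at this
    · have := hEh _ _ (hDh i x hx)
      rwa [add_assoc] at this
  · ext x
    simp only [Module.End.mul_apply, LinearMap.add_apply, LinearMap.smul_apply]
    have cD : ∀ z, D (H.a z) = H.a (D z) := fun z => DFunLike.congr_fun hDa z
    have cE : ∀ z, E (H.a z) = H.a (E z) := fun z => DFunLike.congr_fun hEa z
    rw [cE x, cD (E x), cD x, cE (D x), map_add, map_smul]
  · intro i x hx y
    simp only [LinearMap.add_apply, LinearMap.smul_apply, Module.End.mul_apply,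
      map_add, map_smul, LinearMap.smul_apply]
    -- first term
    have h1 : H.bracket (D (E x)) ((H.a ^ (k + s)) y)
        = (ssign K θ (i + μ) * ssign K μ i) • H.bracket ((H.a ^ (k + s)) x) (E (D y)) := by
      have step1 := hDq (i + μ) (E x) (hEh i x hx) ((H.a ^ s) y)
      have e1 : (H.a ^ k) ((H.a ^ s) y) = (H.a ^ (k + s)) y := by
        rw [← Module.End.mul_apply, ← pow_add]
      have e2 : (H.a ^ k) (E x) = E ((H.a ^ k) x) := (comm_pow hEa k x).symm
      have e3 : D ((H.a ^ s) y) = (H.a ^ s) (D y) := comm_pow hDa s y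
      rw [e1, e2, e3] at step1
      have step2 := hEq i ((H.a ^ k) x) (apow_mem H k i x hx) (D y)
      have e4 : (H.a ^ s) ((H.a ^ k) x) = (H.a ^ (k + s)) x := by
        rw [← Module.End.mul_apply, ← pow_add, add_comm]
      rw [e4] at step2
      rw [step1, step2, smul_smul]
    have h2 : H.bracket (E (D x)) ((H.a ^ (k + s)) y)
        = (ssign K μ (i + θ) * ssign K θ i) • H.bracket ((H.a ^ (k + s)) x) (D (E y)) := by
      have step1 := hEq (i + θ) (D x) (hDh i x hx) ((H.a ^ k) y)
      have e1 : (H.a ^ s) ((H.a ^ k) y) = (H.a ^ (k + s)) y := by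
        rw [← Module.End.mul_apply, ← pow_add, add_comm]
      have e2 : (H.a ^ s) (D x) = D ((H.a ^ s) x) := (comm_pow hDa s x).symm
      have e3 : E ((H.a ^ k) y) = (H.a ^ k) (E y) := comm_pow hEa k y
      rw [e1, e2, e3] at step1
      have step2 := hDq i ((H.a ^ s) x) (apow_mem H s i x hx) (E y)
      have e4 : (H.a ^ k) ((H.a ^ s) x) = (H.a ^ (k + s)) x := by
        rw [← Module.End.mul_apply, ← pow_add]
      rw [e4] at step2
      rw [step1, step2, smul_smul]
    rw [h1, h2, smul_smul, ssign_id1, ssign_id2, smul_add, smul_smul]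
    abel
end
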